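/- arXiv:math/0701923 — 2 statements merged into one kernel-verified Lean document; each statement's English description precedes it below -/
import Mathlib

section
/- For positive reals $a,b$ with $ab<1/2$ and any $t\in(0,1)$, the quantity $q(t) = (-432a^4b^4+72a^2b^2+1)t(1-t)+8a^2(1-t)^2+8b^2t^2$ is strictly positive. -/
theorem q_positive (a b t : ℝ) (ha : 0 < a) (hb : 0 < b)
    (hab : a * b < 1 / 2) (ht0 : 0 < t) (ht1 : t < 1) :
    0 < (-432 * a ^ 4 * b ^ 4 + 72 * a ^ 2 * b ^ 2 + 1) * (t * (1 - t))
        + 8 * a ^ 2 * (1 - t) ^ 2 + 8 * b ^ 2 * t ^ 2 := by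
  have ht : 0 < t * (1 - t) := mul_pos ht0 (by linarith)
  have hs : 0 < a * b := mul_pos ha hb
  have h1 : 0 < 1 - 2 * (a * b) := by linarith
  have h2 : 0 < 216 * (a*b)^3 + 108 * (a*b)^2 + 18 * (a*b) + 1 := by positivity
  nlinarith [sq_nonneg (a * (1 - t) - b * t), mul_pos (mul_pos h1 h2) ht,
    mul_nonneg (sq_nonneg (a * (1 - t) - b * t)) ht.le]
end

section
/- Let $a,b>0$ and $t\in(0,1)$. For any real parameter $v$ with $v^2\neq a^2$ and $2bv\neq 1$, define $\xi(v)=\frac{bv^2-v+a^2b}{(1-t)(a^2-v^2)}$ and $z(v)=\frac{(bv^2-v+a^2b)((1-t)v^2-2tbv+t-(1-t)a^2)}{(2bv-1)(v^2-a^2)}$. Then the pair $(z(v),\xi(v))$ satisfies the quartic equation $\xi^4-\frac{2z}{t(1-t)}\xi^3+(\frac{z^2}{t^2(1-t)^2}-\frac{a^2}{t^2}-\frac{b^2}{(1-t)^2}+\frac{1}{t(1-t)})\xi^2+(\frac{2b^2}{t(1-t)^3}-\frac{1}{t^2(1-t)^2})z\xi-\frac{b^2z^2}{t^2(1-t)^4}=0$.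 -/
/-!
Writing `z = ξ w`, every monomial of the quartic is divisible by `ξ²`, and the cofactor is
`ξ² (1 - t)² (t (1 - t) - w)² - Q(w)` with `Q` quadratic in `w`. So the curve is birational to
the conic `(ξ (t (1 - t) - w))² (1 - t)² = Q(w)`, and `v` parametrizes that conic.
-/

variable {K : Type*} [Field K]

def spectralQuartic (a b t ξ z : K) : K :=
  ξ ^ 4 - 2 * z / (t * (1 - t)) * ξ ^ 3
    + (z ^ 2 / (t ^ 2 * (1 - t) ^ 2) - a ^ 2 / t ^ 2 - b ^ 2 / (1 - t) ^ 2
        + 1 / (t * (1 - t))) * ξ ^ 2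
    + (2 * b ^ 2 / (t * (1 - t) ^ 3) - 1 / (t ^ 2 * (1 - t) ^ 2)) * z * ξ
    - b ^ 2 * z ^ 2 / (t ^ 2 * (1 - t) ^ 4)

def SpectralConic (a b t ξ w : K) : Prop :=
  (1 - t) ^ 2 * ξ ^ 2 * (t * (1 - t) - w) ^ 2 =
    (a ^ 2 * (1 - t) ^ 2 + b ^ 2 * t ^ 2 - t * (1 - t)) * (1 - t) ^ 2
      - (2 * b ^ 2 * t * (1 - t) - (1 - t) ^ 2) * w + b ^ 2 * w ^ 2

/-- The ratio `z / ξ` along the parametrization. -/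
def spectralSlope (a b t v : K) : K :=
  -((1 - t) * ((1 - t) * v ^ 2 - 2 * t * b * v + t - (1 - t) * a ^ 2)) / (2 * b * v - 1)

theorem spectralQuartic_mul_eq {a b t : K} (ht : t ≠ 0) (ht' : 1 - t ≠ 0) (ξ w : K) :
    t ^ 2 * (1 - t) ^ 4 * spectralQuartic a b t ξ (ξ * w) =
      ξ ^ 2 * ((1 - t) ^ 2 * ξ ^ 2 * (t * (1 - t) - w) ^ 2
        - ((a ^ 2 * (1 - t) ^ 2 + b ^ 2 * t ^ 2 - t * (1 - t)) * (1 - t) ^ 2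
          - (2 * b ^ 2 * t * (1 - t) - (1 - t) ^ 2) * w + b ^ 2 * w ^ 2)) := by
  unfold spectralQuartic
  field_simp
  ring

theorem spectralQuartic_eq_zero_of_spectralConic {a b t ξ w : K} (ht : t ≠ 0) (ht' : 1 - t ≠ 0)
    (h : SpectralConic a b t ξ w) : spectralQuartic a b t ξ (ξ * w) = 0 := by
  have := spectralQuartic_mul_eq (a := a) (b := b) ht ht' ξ w
  rw [h, sub_self, mul_zero] at this
  exact (mul_eq_zero.1 this).resolve_left (mul_ne_zero (pow_ne_zero _ ht) (pow_ne_zero _ ht'))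

theorem spectralConic_param {a b t v : K} (ht' : 1 - t ≠ 0) (hva : a ^ 2 - v ^ 2 ≠ 0)
    (hbv : 2 * b * v - 1 ≠ 0) :
    SpectralConic a b t ((b * v ^ 2 - v + a ^ 2 * b) / ((1 - t) * (a ^ 2 - v ^ 2)))
      (spectralSlope a b t v) := by
  have hbv' : b * v * 2 - 1 ≠ 0 := fun h => hbv (by linear_combination h)
  unfold SpectralConic spectralSlope
  field_simp
  ring

theorem rational_parametrization_satisfies_quartic_general
    (a b t v : ℝ)
    (ht0 : 0 < t) (ht1 : t < 1)
    (hv1 : v ^ 2 ≠ a ^ 2) (hv2 : 2 * b * v ≠ 1)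
    (ξ z : ℝ)
    (hξ : ξ = (b * v ^ 2 - v + a ^ 2 * b) / ((1 - t) * (a ^ 2 - v ^ 2)))
    (hz : z = (b * v ^ 2 - v + a ^ 2 * b) * ((1 - t) * v ^ 2 - 2 * t * b * v + t - (1 - t) * a ^ 2)
              / ((2 * b * v - 1) * (v ^ 2 - a ^ 2))) :
    ξ ^ 4 - 2 * z / (t * (1 - t)) * ξ ^ 3
      + (z ^ 2 / (t ^ 2 * (1 - t) ^ 2) - a ^ 2 / t ^ 2 - b ^ 2 / (1 - t) ^ 2
          + 1 / (t * (1 - t))) * ξ ^ 2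
      + (2 * b ^ 2 / (t * (1 - t) ^ 3) - 1 / (t ^ 2 * (1 - t) ^ 2)) * z * ξ
      - b ^ 2 * z ^ 2 / (t ^ 2 * (1 - t) ^ 4) = 0 := by
  have ht : t ≠ 0 := ht0.ne'
  have ht' : 1 - t ≠ 0 := (sub_pos.2 ht1).ne'
  have hva : a ^ 2 - v ^ 2 ≠ 0 := sub_ne_zero.2 hv1.symm
  have hav : v ^ 2 - a ^ 2 ≠ 0 := sub_ne_zero.2 hv1
  have hbv : 2 * b * v - 1 ≠ 0 := sub_ne_zero.2 hv2
  have hzξ : z = ξ * spectralSlope a b t v := by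
    rw [hz, hξ, spectralSlope]
    field_simp
    ring
  change spectralQuartic a b t ξ z = 0
  rw [hzξ]
  exact spectralQuartic_eq_zero_of_spectralConic ht ht' (hξ ▸ spectralConic_param ht' hva hbv)

theorem rational_parametrization_satisfies_quartic
    (a b t v : ℝ) (ha : 0 < a) (hb : 0 < b)
    (ht0 : 0 < t) (ht1 : t < 1)
    (hv1 : v ^ 2 ≠ a ^ 2) (hv2 : 2 * b * v ≠ 1)
    (ξ z : ℝ)
    (hξ : ξ = (b * v ^ 2 - v + a ^ 2 * b) / ((1 - t) * (a ^ 2 - v ^ 2)))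
    (hz : z = (b * v ^ 2 - v + a ^ 2 * b) * ((1 - t) * v ^ 2 - 2 * t * b * v + t - (1 - t) * a ^ 2)
              / ((2 * b * v - 1) * (v ^ 2 - a ^ 2))) :
    ξ ^ 4 - 2 * z / (t * (1 - t)) * ξ ^ 3
      + (z ^ 2 / (t ^ 2 * (1 - t) ^ 2) - a ^ 2 / t ^ 2 - b ^ 2 / (1 - t) ^ 2
          + 1 / (t * (1 - t))) * ξ ^ 2
      + (2 * b ^ 2 / (t * (1 - t) ^ 3) - 1 / (t ^ 2 * (1 - t) ^ 2)) * z * ξ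
      - b ^ 2 * z ^ 2 / (t ^ 2 * (1 - t) ^ 4) = 0 :=
  rational_parametrization_satisfies_quartic_general a b t v ht0 ht1 hv1 hv2 ξ z hξ hz
end
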